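/- arXiv:2411.08364 — 3 statements merged into one kernel-verified Lean document; each statement's English description precedes it below -/
import Mathlib

section
/- For every ε > 0, every μ, ν ∈ ℝ, and every c ≥ 1, there exist constants t₀, σ₀, γ > 0 such that for all integers N ≥ 1 and all s = σ + it with t ≥ t₀ and σ ≥ σ₀ N^γ, one has |G(s)| · N^{μσ + ν} · c^σ < ε. -/
open Complex Filter

/-- `Ω(s) = ∏_{i=1}^k Γ(αᵢ s + βᵢ)`. -/
noncomputable def Omega (k : ℕ) (α β : Fin k → ℝ) (s : ℂ) : ℂ :=
  ∏ i, Complex.Gamma ((α i : ℂ) * s + (β i : ℂ))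

/-- `G(s) = λ^{2s-δ} Ω(δ-s) / Ω(s)`. -/
noncomputable def Gfun (k : ℕ) (α β : Fin k → ℝ) (lam δ : ℝ) (s : ℂ) : ℂ :=
  (lam : ℂ) ^ (2 * s - (δ : ℂ)) * Omega k α β ((δ : ℂ) - s) / Omega k α β s

section AuxLemmas

open Real Topology MeasureTheory


lemma sinh_le_mul_exp {t : ℝ} : Real.sinh t ≤ t * Real.exp t := by
  rw [Real.sinh_eq]
  have h1 : (-(2*t)) + 1 ≤ Real.exp (-(2*t)) := Real.add_one_le_exp _
  have h2 : Real.exp (-t) = Real.exp t * Real.exp (-(2*t)) := by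
    rw [← Real.exp_add]; ring_nf
  nlinarith [Real.exp_pos (-(2*t)), Real.exp_pos t]

lemma one_le_prod_aux (v : ℝ) (g : ℕ → ℝ) (m : ℕ) (hg : ∀ j, 0 < g j) :
    (1:ℝ) ≤ ∏ j ∈ Finset.range m, (1 + v^2/(g j)^2) := by
  calc (1:ℝ) = ∏ j ∈ Finset.range m, 1 := by simp
    _ ≤ ∏ j ∈ Finset.range m, (1 + v^2/(g j)^2) := by
        apply Finset.prod_le_prod (fun i _ => by norm_num)
        intro i _
        have := hg i
        have : 0 ≤ v^2/(g i)^2 := by positivity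
        linarith

lemma prod_one_add_sq_le (y : ℝ) (n : ℕ) :
    ∏ j ∈ Finset.range n, (1 + y^2/((j:ℝ)+1)^2) ≤ Real.exp (Real.pi * |y|) := by
  rcases eq_or_ne y 0 with rfl | hy
  · simp [Real.exp_nonneg]
  · set v := |y| with hv
    have hv0 : 0 < v := abs_pos.mpr hy
    have hyv : y^2 = v^2 := (_root_.sq_abs y).symm
    rw [hyv]
    have hfac : ∀ m:ℕ, (∏ j ∈ Finset.range m, ((1:ℂ) - ((v:ℂ)*Complex.I)^2/((j:ℂ)+1)^2))
        = ((∏ j ∈ Finset.range m, (1 + v^2/((j:ℝ)+1)^2) : ℝ) : ℂ) := by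
      intro m
      rw [Complex.ofReal_prod]
      apply Finset.prod_congr rfl
      intro j _
      have : ((v:ℂ)*Complex.I)^2 = -((v:ℂ)^2) := by rw [mul_pow, Complex.I_sq]; ring
      rw [this]
      push_cast
      ring
    have key : Tendsto (fun m : ℕ => Real.pi * v * ∏ j ∈ Finset.range m, (1 + v^2/((j:ℝ)+1)^2))
        atTop (𝓝 (Real.sinh (Real.pi * v))) := by
      have hE := Complex.tendsto_euler_sin_prod ((v:ℂ) * Complex.I)
      have him := (Complex.continuous_im.tendsto _).comp hE
      have heq : (Complex.im ∘ fun m : ℕ => (Real.pi:ℂ) * ((v:ℂ) * Complex.I) *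
          ∏ j ∈ Finset.range m, ((1:ℂ) - ((v:ℂ)*Complex.I)^2/((j:ℂ)+1)^2))
          = fun m : ℕ => Real.pi * v * ∏ j ∈ Finset.range m, (1 + v^2/((j:ℝ)+1)^2) := by
        funext m
        simp only [Function.comp_apply, hfac m]
        have : (Real.pi:ℂ) * ((v:ℂ) * Complex.I) * ((∏ j ∈ Finset.range m, (1 + v^2/((j:ℝ)+1)^2) : ℝ) : ℂ)
            = ((Real.pi * v * ∏ j ∈ Finset.range m, (1 + v^2/((j:ℝ)+1)^2) : ℝ):ℂ) * Complex.I := by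
          push_cast; ring
        rw [this, Complex.mul_I_im, Complex.ofReal_re]
      rw [heq] at him
      convert him using 2
      have : (Real.pi:ℂ) * ((v:ℂ) * Complex.I) = ((Real.pi * v : ℝ):ℂ) * Complex.I := by push_cast; ring
      rw [this, Complex.sin_mul_I, Complex.mul_I_im, ← Complex.ofReal_sinh, Complex.ofReal_re]
    have hmono : ∀ m, n ≤ m → Real.pi * v * ∏ j ∈ Finset.range n, (1 + v^2/((j:ℝ)+1)^2)
        ≤ Real.pi * v * ∏ j ∈ Finset.range m, (1 + v^2/((j:ℝ)+1)^2) := by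
      intro m hm
      have hstep : ∏ j ∈ Finset.range n, (1 + v^2/((j:ℝ)+1)^2) ≤ ∏ j ∈ Finset.range m, (1 + v^2/((j:ℝ)+1)^2) := by
        obtain ⟨r, rfl⟩ := Nat.exists_eq_add_of_le hm
        rw [Finset.prod_range_add]
        have h1 : (1:ℝ) ≤ ∏ j ∈ Finset.range r, (1 + v^2/(((n+j:ℕ):ℝ)+1)^2) :=
          one_le_prod_aux v (fun j => ((n+j:ℕ):ℝ)+1) r (fun j => by positivity)
        have h0 : (0:ℝ) ≤ ∏ j ∈ Finset.range n, (1 + v^2/((j:ℝ)+1)^2) := by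
          apply Finset.prod_nonneg; intro i _; positivity
        nlinarith
      have hπv : (0:ℝ) < Real.pi * v := by positivity
      exact mul_le_mul_of_nonneg_left hstep hπv.le
    have hle : Real.pi * v * ∏ j ∈ Finset.range n, (1 + v^2/((j:ℝ)+1)^2) ≤ Real.sinh (Real.pi * v) :=
      ge_of_tendsto key (Filter.eventually_atTop.mpr ⟨n, hmono⟩)
    have h2 : Real.sinh (Real.pi * v) ≤ (Real.pi * v) * Real.exp (Real.pi * v) := sinh_le_mul_exp
    have hπv : (0:ℝ) < Real.pi * v := by positivity
    rw [← mul_le_mul_iff_right₀ hπv]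
    calc Real.pi * v * ∏ j ∈ Finset.range n, (1 + v^2/((j:ℝ)+1)^2)
        ≤ Real.sinh (Real.pi * v) := hle
      _ ≤ Real.pi * v * Real.exp (Real.pi * v) := h2

lemma abs_Gamma_lb {x : ℝ} (hx : 1 ≤ x) (y : ℝ) :
    Real.Gamma x * Real.exp (-(Real.pi * |y|)/2) ≤ ‖Complex.Gamma ((x:ℂ) + (y:ℂ)*Complex.I)‖ := by
  set z : ℂ := (x:ℂ) + (y:ℂ)*Complex.I with hz
  set e : ℝ := Real.exp (-(Real.pi * |y|)/2) with he
  have he0 : 0 < e := Real.exp_pos _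
  have hx0 : (0:ℝ) < x := by linarith
  have key : ∀ n : ℕ, 1 ≤ n → Real.GammaSeq x n * e ≤ ‖Complex.GammaSeq z n‖ := by
    intro n hn
    have hn0 : (0:ℝ) < (n:ℝ) := by exact_mod_cast hn
    have habs : ‖Complex.GammaSeq z n‖
        = (n:ℝ)^x * (n.factorial:ℝ) / ∏ j ∈ Finset.range (n+1), ‖z + j‖ := by
      rw [Complex.GammaSeq, norm_div, norm_mul, norm_prod]
      congr 2
      · rw [show ((n:ℂ)) = (((n:ℝ)):ℂ) by push_cast; rfl,
          Complex.norm_cpow_eq_rpow_re_of_pos hn0]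
        congr 1
        simp [hz]
      · simp
    have hprod_pos : (0:ℝ) < ∏ j ∈ Finset.range (n+1), (x + (j:ℝ)) :=
      Finset.prod_pos (fun j _ => by positivity)
    have hPpos : (0:ℝ) < ∏ j ∈ Finset.range (n+1), ‖z + j‖ := by
      apply Finset.prod_pos
      intro j _
      apply norm_pos_iff.mpr
      intro hzero
      have : (z + (j:ℂ)).re = 0 := by rw [hzero]; simp
      simp [hz] at this
      linarith
    have hPle : ∏ j ∈ Finset.range (n+1), ‖z + j‖
        ≤ (∏ j ∈ Finset.range (n+1), (x + (j:ℝ))) * Real.exp (Real.pi * |y| / 2) := by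
      have hsq : (∏ j ∈ Finset.range (n+1), ‖z + j‖)^2
          ≤ ((∏ j ∈ Finset.range (n+1), (x + (j:ℝ))) * Real.exp (Real.pi * |y| / 2))^2 := by
        rw [← Finset.prod_pow]
        have h1 : ∀ j ∈ Finset.range (n+1), ‖z + j‖^2
            = (x + (j:ℝ))^2 + y^2 := by
          intro j _
          rw [show z + (j:ℂ) = ((x + (j:ℝ) : ℝ):ℂ) + (y:ℂ)*Complex.I by push_cast [hz]; ring]
          rw [Complex.sq_norm, Complex.normSq_add_mul_I]
        rw [Finset.prod_congr rfl h1]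
        have h2 : ∏ j ∈ Finset.range (n+1), ((x + (j:ℝ))^2 + y^2)
            ≤ ∏ j ∈ Finset.range (n+1), ((x + (j:ℝ))^2 * (1 + y^2/((j:ℝ)+1)^2)) := by
          apply Finset.prod_le_prod (fun j _ => by positivity)
          intro j _
          have hj1 : ((j:ℝ)+1) ≤ x + j := by linarith
          have hj0 : (0:ℝ) < (j:ℝ)+1 := by positivity
          have h4 : ((j:ℝ)+1)^2 ≤ (x+(j:ℝ))^2 := by nlinarith
          have h5 : y^2 ≤ (x+(j:ℝ))^2 * (y^2/((j:ℝ)+1)^2) := by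
            rw [mul_div_assoc', le_div_iff₀ (by positivity)]
            nlinarith [sq_nonneg y]
          nlinarith
        refine h2.trans ?_
        rw [Finset.prod_mul_distrib, mul_pow, Finset.prod_pow]
        have h6 : Real.exp (Real.pi * |y| / 2)^2 = Real.exp (Real.pi * |y|) := by
          rw [pow_two, ← Real.exp_add]
          ring_nf
        rw [h6]
        apply mul_le_mul_of_nonneg_left (prod_one_add_sq_le y (n+1))
        positivity
      have hP0 : (0:ℝ) ≤ ∏ j ∈ Finset.range (n+1), ‖z + j‖ :=
        Finset.prod_nonneg (fun j _ => norm_nonneg _)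
      exact (pow_le_pow_iff_left₀ hP0 (by positivity) two_ne_zero).mp hsq
    rw [habs, Real.GammaSeq, div_mul_eq_mul_div, div_le_div_iff₀ hprod_pos hPpos]
    have hee : e * Real.exp (Real.pi * |y| / 2) = 1 := by
      rw [he, ← Real.exp_add, show -(Real.pi * |y|)/2 + Real.pi * |y|/2 = 0 by ring, Real.exp_zero]
    calc (n:ℝ)^x * (n.factorial:ℝ) * e * ∏ j ∈ Finset.range (n+1), ‖z + j‖
        ≤ (n:ℝ)^x * (n.factorial:ℝ) * e * ((∏ j ∈ Finset.range (n+1), (x + (j:ℝ))) * Real.exp (Real.pi * |y| / 2)) := by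
          apply mul_le_mul_of_nonneg_left hPle
          positivity
      _ = (n:ℝ)^x * (n.factorial:ℝ) * (∏ j ∈ Finset.range (n+1), (x + (j:ℝ))) * (e * Real.exp (Real.pi * |y| / 2)) := by ring
      _ = (n:ℝ)^x * (n.factorial:ℝ) * ∏ j ∈ Finset.range (n+1), (x + (j:ℝ)) := by rw [hee, mul_one]
  have h1 : Tendsto (fun n => ‖Complex.GammaSeq z n‖) atTop (𝓝 (‖Complex.Gamma z‖)) := by
    have := (Complex.GammaSeq_tendsto_Gamma z).norm
    simpa using this
  have h2 : Tendsto (fun n => Real.GammaSeq x n * e) atTop (𝓝 (Real.Gamma x * e)) :=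
    (Real.GammaSeq_tendsto_Gamma x).mul_const e
  exact le_of_tendsto_of_tendsto h2 h1 (Filter.eventually_atTop.mpr ⟨1, key⟩)

lemma abs_sin_lb (z : ℂ) : Real.sinh |z.im| ≤ ‖Complex.sin z‖ := by
  rw [Complex.sin]
  simp only [norm_div, norm_mul, Complex.norm_I, Complex.norm_two, mul_one]
  have h1 : ‖Complex.exp (-z * Complex.I)‖ = Real.exp z.im := by
    rw [Complex.norm_exp]; congr 1; simp
  have h2 : ‖Complex.exp (z * Complex.I)‖ = Real.exp (-z.im) := by
    rw [Complex.norm_exp]; congr 1; simp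
  have h3 : |Real.exp z.im - Real.exp (-z.im)| ≤ ‖Complex.exp (-z * Complex.I) - Complex.exp (z * Complex.I)‖ := by
    rw [← h1, ← h2]
    exact (abs_norm_sub_norm_le _ _)
  have h4 : 2 * Real.sinh |z.im| = |Real.exp z.im - Real.exp (-z.im)| := by
    rcases le_or_gt 0 z.im with h | h
    · rw [_root_.abs_of_nonneg h, Real.sinh_eq, _root_.abs_of_nonneg]
      · ring
      · have := Real.exp_le_exp.mpr (neg_le_self h)
        linarith
    · rw [_root_.abs_of_neg h, Real.sinh_eq, _root_.abs_of_neg]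
      · rw [neg_neg, Real.exp_neg]; ring
      · have := Real.exp_lt_exp.mpr (show z.im < -z.im by linarith)
        linarith
  rw [le_div_iff₀ (by norm_num : (0:ℝ) < 2)]
  linarith

lemma Gamma_integral_lb {x : ℝ} (hx : 1 ≤ x) :
    x^(x-1) * Real.exp (-(x+1)) ≤ Real.Gamma x := by
  have hx0 : (0:ℝ) < x := by linarith
  rw [Real.Gamma_eq_integral hx0]
  have hsub : Set.Ioc x (x+1) ⊆ Set.Ioi (0:ℝ) := fun t ht => lt_trans hx0 ht.1
  have hint : IntegrableOn (fun t : ℝ => Real.exp (-t) * t ^ (x-1)) (Set.Ioi 0) :=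
    Real.GammaIntegral_convergent hx0
  have step1 : ∫ t in Set.Ioc x (x+1), Real.exp (-t) * t ^ (x-1)
      ≤ ∫ t in Set.Ioi (0:ℝ), Real.exp (-t) * t ^ (x-1) := by
    apply setIntegral_mono_set hint
    · filter_upwards [self_mem_ae_restrict measurableSet_Ioi] with t ht
      have : (0:ℝ) < t := ht
      positivity
    · exact HasSubset.Subset.eventuallyLE hsub
  refine le_trans ?_ step1
  have step2 : x^(x-1) * Real.exp (-(x+1)) * (volume (Set.Ioc x (x+1))).toReal
      ≤ ∫ t in Set.Ioc x (x+1), Real.exp (-t) * t ^ (x-1) := by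
    apply setIntegral_ge_of_const_le_real measurableSet_Ioc
    · rw [Real.volume_Ioc]; exact ENNReal.ofReal_ne_top
    · intro t ht
      have ht1 : x ≤ t := ht.1.le
      have ht2 : t ≤ x + 1 := ht.2
      have h5 : x^(x-1) ≤ t^(x-1) := Real.rpow_le_rpow hx0.le ht1 (by linarith)
      have h6 : Real.exp (-(x+1)) ≤ Real.exp (-t) := Real.exp_le_exp.mpr (by linarith)
      calc x^(x-1) * Real.exp (-(x+1)) ≤ t^(x-1) * Real.exp (-t) := by
            exact mul_le_mul h5 h6 (Real.exp_pos _).le (Real.rpow_nonneg (by linarith) _)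
        _ = Real.exp (-t) * t^(x-1) := by ring
    · exact hint.mono_set hsub
  have hvol : (volume (Set.Ioc x (x+1))).toReal = 1 := by
    rw [Real.volume_Ioc]
    norm_num
  rw [hvol, mul_one] at step2
  exact step2

lemma one_le_Gamma_of_eight_le {x : ℝ} (hx : 8 ≤ x) : 1 ≤ Real.Gamma x := by
  have hx1 : (1:ℝ) ≤ x := by linarith
  refine le_trans ?_ (Gamma_integral_lb hx1)
  have hlog : 2 ≤ Real.log x := by
    rw [Real.le_log_iff_exp_le (by linarith)]
    have h := Real.exp_one_lt_d9
    calc Real.exp 2 = Real.exp 1 * Real.exp 1 := by rw [← Real.exp_add]; norm_num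
      _ ≤ 2.7182818286 * 2.7182818286 := by nlinarith [Real.exp_pos 1]
      _ ≤ 8 := by norm_num
      _ ≤ x := hx
  rw [Real.rpow_def_of_pos (by linarith : (0:ℝ) < x), ← Real.exp_add]
  apply Real.one_le_exp
  nlinarith [mul_nonneg (sub_nonneg.mpr hlog) (show (0:ℝ) ≤ x - 1 by linarith)]

lemma exp_quarter_le_sinh {t : ℝ} (ht : 1 ≤ t) : Real.exp t / 4 ≤ Real.sinh t := by
  rw [Real.sinh_eq]
  have h1 : t + 1 ≤ Real.exp t := Real.add_one_le_exp t
  have h2 : Real.exp (-t) = (Real.exp t)⁻¹ := Real.exp_neg t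
  have h3 : Real.exp t * (Real.exp t)⁻¹ = 1 := mul_inv_cancel₀ (Real.exp_pos t).ne'
  nlinarith [Real.exp_pos t, inv_pos.mpr (Real.exp_pos t)]

lemma factor_ratio_bound {a b δ' : ℝ} (ha : 0 < a) (s : ℂ)
    (ht1 : 1 ≤ a * s.im)
    (hx : 8 ≤ a*s.re + b) (hx' : 8 ≤ a*s.re + (1 - b - a*δ')) :
    ‖Complex.Gamma ((a:ℂ) * ((δ':ℂ) - s) + (b:ℂ))‖
      / ‖Complex.Gamma ((a:ℂ) * s + (b:ℂ))‖
    ≤ 4*Real.pi / (Real.Gamma (a*s.re + b) * Real.Gamma (a*s.re + (1 - b - a*δ'))) := by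
  set T : ℝ := a * s.im with hT
  have hT1 : (1:ℝ) ≤ T := ht1
  have hT0 : (0:ℝ) < T := by linarith
  set x : ℝ := a*s.re + b with hxdef
  set x' : ℝ := a*s.re + (1 - b - a*δ') with hx'def
  set w : ℂ := (a:ℂ) * ((δ':ℂ) - s) + (b:ℂ) with hw
  set E : ℝ := Real.exp (-(Real.pi * T)/2) with hE
  have hE0 : 0 < E := Real.exp_pos _
  have hΓx : (0:ℝ) < Real.Gamma x := Real.Gamma_pos_of_pos (by linarith)
  have hΓx' : (0:ℝ) < Real.Gamma x' := Real.Gamma_pos_of_pos (by linarith)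
  -- lower bound on |Γ(a s + b)|
  have hzform : (a:ℂ) * s + (b:ℂ) = ((x:ℝ):ℂ) + ((T:ℝ):ℂ)*Complex.I := by
    apply Complex.ext <;> simp [hxdef, hT] <;> ring
  have hB : Real.Gamma x * E ≤ ‖Complex.Gamma ((a:ℂ) * s + (b:ℂ))‖ := by
    rw [hzform]
    have := abs_Gamma_lb (show (1:ℝ) ≤ x by linarith) T
    rwa [abs_of_pos hT0] at this
  -- lower bound on |Γ(1 - w)|
  have h1wform : 1 - w = ((x':ℝ):ℂ) + ((T:ℝ):ℂ)*Complex.I := by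
    apply Complex.ext <;> simp [hw, hx'def, hT] <;> ring
  have hC : Real.Gamma x' * E ≤ ‖Complex.Gamma (1 - w)‖ := by
    rw [h1wform]
    have := abs_Gamma_lb (show (1:ℝ) ≤ x' by linarith) T
    rwa [abs_of_pos hT0] at this
  -- lower bound on |sin(π w)|
  have hwim : ((Real.pi:ℂ) * w).im = -(Real.pi * T) := by
    simp [hw, hT]
  have hS : Real.exp (Real.pi * T) / 4 ≤ ‖Complex.sin ((Real.pi:ℂ) * w)‖ := by
    refine le_trans ?_ (abs_sin_lb _)
    rw [hwim, abs_neg, abs_of_pos (by positivity)]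
    exact exp_quarter_le_sinh (by nlinarith [Real.pi_gt_three])
  -- reflection formula
  have hrefl := Complex.Gamma_mul_Gamma_one_sub w
  have habs : ‖Complex.Gamma w‖ * ‖Complex.Gamma (1 - w)‖
      = Real.pi / ‖Complex.sin ((Real.pi:ℂ) * w)‖ := by
    rw [← norm_mul, hrefl, norm_div, Complex.norm_real, Real.norm_eq_abs, _root_.abs_of_pos Real.pi_pos]
  have hSpos : (0:ℝ) < ‖Complex.sin ((Real.pi:ℂ) * w)‖ :=
    lt_of_lt_of_le (by positivity) hS
  have hCpos : (0:ℝ) < ‖Complex.Gamma (1 - w)‖ :=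
    lt_of_lt_of_le (by positivity) hC
  have hBpos : (0:ℝ) < ‖Complex.Gamma ((a:ℂ) * s + (b:ℂ))‖ :=
    lt_of_lt_of_le (by positivity) hB
  -- express |Γ(w)|
  have hA : ‖Complex.Gamma w‖
      = Real.pi / (‖Complex.sin ((Real.pi:ℂ) * w)‖ * ‖Complex.Gamma (1 - w)‖) := by
    rw [eq_div_iff (by positivity)]
    calc ‖Complex.Gamma w‖ * (‖Complex.sin ((Real.pi:ℂ) * w)‖ * ‖Complex.Gamma (1 - w)‖)
        = (‖Complex.Gamma w‖ * ‖Complex.Gamma (1 - w)‖) * ‖Complex.sin ((Real.pi:ℂ) * w)‖ := by ring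
      _ = Real.pi := by rw [habs, div_mul_cancel₀ _ hSpos.ne']
  rw [hA, div_div]
  rw [div_le_div_iff₀ (by positivity) (by positivity)]
  -- π * (Γx * Γx') ≤ 4π * (S * C * B)
  have hkey : Real.Gamma x * Real.Gamma x' / 4
      ≤ ‖Complex.sin ((Real.pi:ℂ) * w)‖ * ‖Complex.Gamma (1 - w)‖
        * ‖Complex.Gamma ((a:ℂ) * s + (b:ℂ))‖ := by
    have step : Real.exp (Real.pi * T) / 4 * (Real.Gamma x' * E) * (Real.Gamma x * E)
        ≤ ‖Complex.sin ((Real.pi:ℂ) * w)‖ * ‖Complex.Gamma (1 - w)‖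
          * ‖Complex.Gamma ((a:ℂ) * s + (b:ℂ))‖ := by
      apply mul_le_mul (mul_le_mul hS hC (by positivity) hSpos.le) hB (by positivity) (by positivity)
    refine le_trans (le_of_eq ?_) step
    have hEE : Real.exp (Real.pi * T) * E * E = 1 := by
      rw [hE, ← Real.exp_add, ← Real.exp_add]
      rw [show Real.pi * T + -(Real.pi * T)/2 + -(Real.pi * T)/2 = 0 by ring, Real.exp_zero]
    calc Real.Gamma x * Real.Gamma x' / 4
        = (Real.Gamma x * Real.Gamma x' / 4) * (Real.exp (Real.pi * T) * E * E) := by rw [hEE, mul_one]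
      _ = Real.exp (Real.pi * T) / 4 * (Real.Gamma x' * E) * (Real.Gamma x * E) := by ring
  nlinarith [Real.pi_pos]

lemma arith_aux (a₁ b₁ llam lD lc lε dl g h σ P Q X : ℝ)
    (f1 : a₁ * σ / 2 * (P / 2) ≤ Q * (X - 1))
    (f2 : P * (g * σ) ≤ a₁ / 8 * σ * P)
    (f3 : P * h ≤ h * σ)
    (f4 : llam * (2 * σ - dl) ≤ 2 * σ * |llam| + |dl| * |llam|)
    (f5 : σ * (2 * |llam| + lc + h + a₁ + 1) ≤ a₁ / 8 * σ * P)
    (f6 : lD ≤ |lD|)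
    (f7 : -|lε| ≤ lε)
    (f8 : b₁ ≤ |b₁|)
    (hX : X = a₁ * σ + b₁)
    (hσK : |b₁| + 1 + |dl| * |llam| + |lD| + |lε| + 1 ≤ σ) :
    llam * (2 * σ - dl) + lD + P * (g * σ + h) + lc * σ < lε + (Q * (X - 1) - (X + 1)) := by
  have expand : P * (g * σ + h) = P * (g * σ) + P * h := by ring
  linarith

lemma scalar_eventually (a₁ b₁ lam c D ε δ g h : ℝ) (ha₁ : 0 < a₁) (hlam : 0 < lam)
    (hc : 1 ≤ c) (hD : 0 < D) (hε : 0 < ε) (hg0 : 0 ≤ g) (hg : g ≤ a₁/8) (hh : 0 ≤ h) :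
    ∀ᶠ σ : ℝ in atTop,
      lam ^ (2*σ - δ) * D * σ ^ (g*σ + h) * c ^ σ / Real.Gamma (a₁*σ + b₁) < ε := by
  set llam := Real.log lam with hllam
  set lc := Real.log c with hlc
  have hlc0 : 0 ≤ lc := Real.log_nonneg hc
  set C₁ : ℝ := 2*|llam| + lc + h with hC₁
  set K : ℝ := |b₁| + 1 + |δ| * |llam| + |Real.log D| + |Real.log ε| with hK
  have hC₁0 : 0 ≤ C₁ := by positivity
  filter_upwards [eventually_ge_atTop (1:ℝ),
    eventually_ge_atTop ((8 + |b₁|)/a₁),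
    eventually_ge_atTop ((2/a₁)^2),
    eventually_ge_atTop ((-2*b₁)/a₁),
    eventually_ge_atTop (2*(1+|b₁|)/a₁),
    Real.tendsto_log_atTop.eventually_ge_atTop ((8/a₁)*(C₁+a₁+1)),
    eventually_ge_atTop (K+1)] with σ e1 e2 e3 e4 e5 e6 e8
  set X : ℝ := a₁*σ + b₁ with hX
  have hσ0 : (0:ℝ) < σ := by linarith
  have hX8 : (8:ℝ) ≤ X := by
    have : a₁ * ((8 + |b₁|)/a₁) ≤ a₁ * σ := mul_le_mul_of_nonneg_left e2 ha₁.le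
    rw [mul_div_cancel₀ _ ha₁.ne'] at this
    have := abs_nonneg b₁
    have := neg_abs_le b₁
    simp only [hX]
    linarith
  have hX0 : (0:ℝ) < X := by linarith
  have hΓpos : (0:ℝ) < Real.Gamma X := Real.Gamma_pos_of_pos hX0
  set P := Real.log σ with hP
  set Q := Real.log X with hQ
  have hP0 : 0 ≤ P := Real.log_nonneg e1
  -- sqrt σ ≤ X, hence P/2 ≤ Q
  have hsqrt : Real.sqrt σ ≤ X := by
    have h1 : (2/a₁) ≤ Real.sqrt σ := by
      rw [show (2/a₁ : ℝ) = Real.sqrt ((2/a₁)^2) by rw [Real.sqrt_sq (by positivity)]]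
      exact Real.sqrt_le_sqrt e3
    have h2 : Real.sqrt σ * Real.sqrt σ = σ := Real.mul_self_sqrt hσ0.le
    have h3 : (2/a₁) * Real.sqrt σ ≤ σ := by nlinarith [Real.sqrt_nonneg σ]
    have h4 : Real.sqrt σ ≤ (a₁/2) * σ := by
      have := mul_le_mul_of_nonneg_left h3 (by positivity : (0:ℝ) ≤ a₁/2)
      calc Real.sqrt σ = (a₁/2) * ((2/a₁) * Real.sqrt σ) := by field_simp
        _ ≤ (a₁/2) * σ := mul_le_mul_of_nonneg_left h3 (by positivity)
    have h5 : 0 ≤ (a₁/2)*σ + b₁ := by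
      have : a₁ * ((-2*b₁)/a₁) ≤ a₁ * σ := mul_le_mul_of_nonneg_left e4 ha₁.le
      rw [mul_div_cancel₀ _ ha₁.ne'] at this
      linarith
    simp only [hX]; linarith
  have hPQ : P/2 ≤ Q := by
    have h1 : Real.log (Real.sqrt σ) ≤ Q := Real.log_le_log (Real.sqrt_pos.mpr hσ0) hsqrt
    rw [Real.log_sqrt hσ0.le] at h1
    exact h1
  have hQ0 : 0 ≤ Q := by linarith
  -- X - 1 ≥ a₁σ/2
  have hX1 : a₁*σ/2 ≤ X - 1 := by
    have : a₁ * (2*(1+|b₁|)/a₁) ≤ a₁ * σ := mul_le_mul_of_nonneg_left e5 ha₁.le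
    rw [mul_div_cancel₀ _ ha₁.ne'] at this
    have := neg_abs_le b₁
    simp only [hX]
    linarith
  -- Gamma lower bound
  have hΓlb : Real.exp (Q*(X-1) - (X+1)) ≤ Real.Gamma X := by
    have := Gamma_integral_lb (show (1:ℝ) ≤ X by linarith)
    rw [Real.rpow_def_of_pos hX0] at this
    rw [show Q*(X-1) - (X+1) = Real.log X * (X-1) + (-(X+1)) by rw [hQ]; ring, Real.exp_add]
    exact this
  -- rewrite LHS as exp
  have hLHS : lam ^ (2*σ - δ) * D * σ ^ (g*σ + h) * c ^ σ
      = Real.exp (llam*(2*σ-δ) + Real.log D + P*(g*σ+h) + lc*σ) := by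
    conv_lhs => rw [Real.rpow_def_of_pos hlam, Real.rpow_def_of_pos hσ0,
      Real.rpow_def_of_pos (lt_of_lt_of_le one_pos hc), ← Real.exp_log hD,
      ← Real.exp_add, ← Real.exp_add, ← Real.exp_add]
  rw [hLHS, div_lt_iff₀ hΓpos]
  -- main numeric inequality
  have hmain : llam*(2*σ-δ) + Real.log D + P*(g*σ+h) + lc*σ < Real.log ε + (Q*(X-1) - (X+1)) := by
    have f2 : P*(g*σ) ≤ (a₁/8)*σ*P := by
      have h1 : g*σ ≤ (a₁/8)*σ := mul_le_mul_of_nonneg_right hg hσ0.le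
      calc P*(g*σ) = (g*σ)*P := by ring
        _ ≤ ((a₁/8)*σ)*P := mul_le_mul_of_nonneg_right h1 hP0
        _ = (a₁/8)*σ*P := by ring
    have f3 : P*h ≤ h*σ := by
      have hPσ : P ≤ σ := by
        have := Real.log_le_sub_one_of_pos hσ0
        linarith
      calc P*h = h*P := by ring
        _ ≤ h*σ := mul_le_mul_of_nonneg_left hPσ hh
    have f4 : llam*(2*σ-δ) ≤ 2*σ*|llam| + |δ| * |llam| := by
      have h1 : llam*(2*σ-δ) ≤ |llam*(2*σ-δ)| := le_abs_self _
      rw [abs_mul] at h1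
      have h2 : |2*σ-δ| ≤ 2*σ + |δ| := by
        have := abs_sub (2*σ) δ
        have h3 : |2*σ| = 2*σ := abs_of_nonneg (by linarith)
        calc |2*σ-δ| ≤ |2*σ| + |δ| := abs_sub _ _
          _ = 2*σ + |δ| := by rw [h3]
      have h4 := mul_le_mul_of_nonneg_left h2 (abs_nonneg llam)
      calc llam*(2*σ-δ) ≤ |llam| * |2*σ-δ| := h1
        _ ≤ |llam| * (2*σ + |δ|) := h4
        _ = 2*σ*|llam| + |δ| * |llam| := by ring
    have f1 : (a₁*σ/2)*(P/2) ≤ Q*(X-1) := by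
      apply mul_le_mul hX1 hPQ (by linarith) (by linarith) |>.trans_eq
      ring
    have f5 : σ*(2*|llam| + lc + h + a₁ + 1) ≤ (a₁/8)*σ*P := by
      have h2 : (a₁/8)*σ*((8/a₁)*(C₁+a₁+1)) ≤ (a₁/8)*σ*P :=
        mul_le_mul_of_nonneg_left e6 (by positivity)
      calc σ*(2*|llam| + lc + h + a₁ + 1)
          = (a₁/8)*σ*((8/a₁)*((2*|llam| + lc + h)+a₁+1)) := by field_simp
        _ = (a₁/8)*σ*((8/a₁)*(C₁+a₁+1)) := by rw [hC₁]
        _ ≤ (a₁/8)*σ*P := h2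
    have f6 : Real.log D ≤ |Real.log D| := le_abs_self _
    have f7 : -|Real.log ε| ≤ Real.log ε := neg_abs_le _
    have f8 : b₁ ≤ |b₁| := le_abs_self _
    have hσK : K + 1 ≤ σ := e8
    -- combine
    have hσK' : |b₁| + 1 + |δ| * |llam| + |Real.log D| + |Real.log ε| + 1 ≤ σ := by
      rw [hK] at hσK; linarith
    exact arith_aux a₁ b₁ llam (Real.log D) lc (Real.log ε) δ g h σ P Q X
      f1 f2 f3 f4 f5 f6 f7 f8 hX hσK'
  calc Real.exp (llam*(2*σ-δ) + Real.log D + P*(g*σ+h) + lc*σ)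
      < Real.exp (Real.log ε + (Q*(X-1) - (X+1))) := Real.exp_lt_exp.mpr hmain
    _ = ε * Real.exp (Q*(X-1) - (X+1)) := by rw [Real.exp_add, Real.exp_log hε]
    _ ≤ ε * Real.Gamma X := mul_le_mul_of_nonneg_left hΓlb hε.le

end AuxLemmas

set_option maxHeartbeats 1000000 in
/-- Lemma (Inequality): `|G(s)| N^{μσ+ν} c^σ < ε` for `Im s ≥ t₀` and `Re s ≥ σ₀ N^γ`. -/
theorem Gfun_decay (k : ℕ) (hk : 1 ≤ k) (α β : Fin k → ℝ) (hα : ∀ i, 0 < α i)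
    (lam : ℝ) (hlam : 0 < lam) (δ : ℝ) :
    ∀ ε : ℝ, 0 < ε → ∀ μ ν : ℝ, ∀ c : ℝ, 1 ≤ c →
      ∃ t₀ σ₀ γ : ℝ, 0 < t₀ ∧ 0 < σ₀ ∧ 0 < γ ∧
        ∀ N : ℕ, 1 ≤ N → ∀ s : ℂ, t₀ ≤ s.im → σ₀ * (N : ℝ) ^ γ ≤ s.re →
          ‖Gfun k α β lam δ s‖ * (N : ℝ) ^ (μ * s.re + ν) * c ^ s.re < ε := by
  intro ε hε μ ν c hc
  have hne : (Finset.univ : Finset (Fin k)).Nonempty := ⟨⟨0, hk⟩, Finset.mem_univ _⟩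
  set i₀ : Fin k := ⟨0, hk⟩ with hi₀
  set a₁ : ℝ := α i₀ with ha₁def
  set b₁ : ℝ := β i₀ with hb₁def
  have ha₁ : 0 < a₁ := hα i₀
  set γ : ℝ := 8*(|μ|+|ν|+1)/a₁ with hγdef
  have hγ : 0 < γ := by positivity
  set g : ℝ := |μ|/γ with hgdef
  set h : ℝ := |ν|/γ with hhdef
  have hg0 : 0 ≤ g := by positivity
  have hh0 : 0 ≤ h := by positivity
  have hg : g ≤ a₁/8 := by
    rw [hgdef, hγdef, div_div_eq_mul_div]
    rw [div_le_div_iff₀ (by positivity) (by norm_num)]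
    nlinarith [abs_nonneg μ, abs_nonneg ν, mul_nonneg ha₁.le (abs_nonneg ν), mul_nonneg ha₁.le (abs_nonneg μ), ha₁.le]
  set D : ℝ := (4*Real.pi)^k with hDdef
  have hD : 0 < D := by positivity
  -- t₀
  set t₀ : ℝ := 1 + Finset.univ.sup' hne (fun i => 1/α i) with ht₀def
  have ht₀pos : 0 < t₀ := by
    have h1 : (0:ℝ) < 1/α i₀ := by positivity
    have h2 := Finset.le_sup' (fun i => 1/α i) (Finset.mem_univ i₀)
    simp only [ht₀def]
    linarith
  have ht₀ge : ∀ i, 1/α i ≤ t₀ := by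
    intro i
    have h2 := Finset.le_sup' (fun i => 1/α i) (Finset.mem_univ i)
    simp only [ht₀def]
    linarith
  -- σ₀ pieces
  obtain ⟨S, hS⟩ := Filter.eventually_atTop.mp
    (scalar_eventually a₁ b₁ lam c D ε δ g h ha₁ hlam hc hD hε hg0 hg hh0)
  set B : ℝ := Finset.univ.sup' hne
    (fun i => max ((8+|β i|)/α i) ((8+|1 - β i - α i*δ|)/α i)) with hBdef
  set σ₀ : ℝ := max 1 (max S B) with hσ₀def
  have hσ₀pos : 0 < σ₀ := lt_of_lt_of_le one_pos (le_max_left _ _)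
  refine ⟨t₀, σ₀, γ, ht₀pos, hσ₀pos, hγ, ?_⟩
  intro N hN s hts hσs
  set σ : ℝ := s.re with hσdef
  have hNγ : (1:ℝ) ≤ (N:ℝ)^γ := Real.one_le_rpow (by exact_mod_cast hN) hγ.le
  have hσ₀le : σ₀ ≤ σ := le_trans (le_mul_of_one_le_right hσ₀pos.le hNγ) hσs
  have hσ1 : (1:ℝ) ≤ σ := le_trans (le_max_left _ _) hσ₀le
  have hσ0 : (0:ℝ) < σ := by linarith
  have hσS : S ≤ σ := le_trans ((le_max_left S B).trans (le_max_right 1 _)) hσ₀le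
  have hσB : B ≤ σ := le_trans ((le_max_right S B).trans (le_max_right 1 _)) hσ₀le
  -- conditions for each i
  have hcond : ∀ i : Fin k, 1 ≤ α i * s.im ∧ 8 ≤ α i * σ + β i ∧ 8 ≤ α i * σ + (1 - β i - α i * δ) := by
    intro i
    have hαi := hα i
    constructor
    · have h1 : 1/α i ≤ s.im := le_trans (ht₀ge i) hts
      rw [div_le_iff₀ hαi] at h1
      linarith [mul_comm (α i) s.im ▸ h1]
    constructor
    · have h1 : (8+|β i|)/α i ≤ B := by
        rw [hBdef]
        exact le_trans (le_max_left _ _)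
          (Finset.le_sup' (fun i => max ((8+|β i|)/α i) ((8+|1 - β i - α i*δ|)/α i)) (Finset.mem_univ i))
      have h2 : (8+|β i|)/α i ≤ σ := le_trans h1 hσB
      rw [div_le_iff₀ hαi] at h2
      have := neg_abs_le (β i)
      nlinarith
    · have h1 : (8+|1 - β i - α i*δ|)/α i ≤ B := by
        rw [hBdef]
        exact le_trans (le_max_right _ _)
          (Finset.le_sup' (fun i => max ((8+|β i|)/α i) ((8+|1 - β i - α i*δ|)/α i)) (Finset.mem_univ i))
      have h2 : (8+|1 - β i - α i*δ|)/α i ≤ σ := le_trans h1 hσB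
      rw [div_le_iff₀ hαi] at h2
      have := neg_abs_le (1 - β i - α i*δ)
      nlinarith
  -- positivity of denominators
  have hΓpos : ∀ i : Fin k, (0:ℝ) < ‖Complex.Gamma ((α i:ℂ) * s + (β i:ℂ))‖ := by
    intro i
    have h8 := (hcond i).2.1
    have hzform : (α i:ℂ) * s + (β i:ℂ) = ((α i * σ + β i : ℝ):ℂ) + ((α i * s.im : ℝ):ℂ)*Complex.I := by
      apply Complex.ext <;> simp [hσdef] <;> ring
    rw [hzform]
    refine lt_of_lt_of_le ?_ (abs_Gamma_lb (by linarith) _)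
    have := Real.Gamma_pos_of_pos (show (0:ℝ) < α i * σ + β i by linarith)
    positivity
  -- bound the Gfun
  have habsG : ‖Gfun k α β lam δ s‖
      ≤ lam ^ (2*σ - δ) * (D / Real.Gamma (a₁*σ + b₁)) := by
    rw [Gfun, norm_div, norm_mul]
    have hcpow : ‖(lam:ℂ) ^ (2 * s - (δ:ℂ))‖ = lam ^ (2*σ - δ) := by
      rw [Complex.norm_cpow_eq_rpow_re_of_pos hlam]
      congr 1
      simp [hσdef]
    rw [hcpow, Omega, Omega, norm_prod, norm_prod, mul_div_assoc, ← Finset.prod_div_distrib]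
    have hstep : ∏ i, (‖Complex.Gamma ((α i:ℂ) * ((δ:ℂ) - s) + (β i:ℂ))‖
          / ‖Complex.Gamma ((α i:ℂ) * s + (β i:ℂ))‖)
        ≤ D / Real.Gamma (a₁*σ + b₁) := by
      have hterm : ∀ i ∈ Finset.univ, (‖Complex.Gamma ((α i:ℂ) * ((δ:ℂ) - s) + (β i:ℂ))‖
            / ‖Complex.Gamma ((α i:ℂ) * s + (β i:ℂ))‖)
          ≤ 4*Real.pi / (Real.Gamma (α i*σ + β i) * Real.Gamma (α i*σ + (1 - β i - α i*δ))) := by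
        intro i _
        exact factor_ratio_bound (hα i) s (hcond i).1 (hcond i).2.1 (hcond i).2.2
      calc ∏ i, (‖Complex.Gamma ((α i:ℂ) * ((δ:ℂ) - s) + (β i:ℂ))‖
            / ‖Complex.Gamma ((α i:ℂ) * s + (β i:ℂ))‖)
          ≤ ∏ i, 4*Real.pi / (Real.Gamma (α i*σ + β i) * Real.Gamma (α i*σ + (1 - β i - α i*δ))) := by
            apply Finset.prod_le_prod (fun i _ => by positivity) hterm
        _ = D / ∏ i, (Real.Gamma (α i*σ + β i) * Real.Gamma (α i*σ + (1 - β i - α i*δ))) := by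
            rw [Finset.prod_div_distrib, Finset.prod_const, Finset.card_univ, Fintype.card_fin, hDdef]
        _ ≤ D / Real.Gamma (a₁*σ + b₁) := by
            have hone : ∀ i ∈ Finset.univ, (1:ℝ) ≤ Real.Gamma (α i*σ + β i) * Real.Gamma (α i*σ + (1 - β i - α i*δ)) := by
              intro i _
              have g1 := one_le_Gamma_of_eight_le (hcond i).2.1
              have g2 := one_le_Gamma_of_eight_le (hcond i).2.2
              nlinarith
            have h8 : (8:ℝ) ≤ a₁*σ + b₁ := by rw [ha₁def, hb₁def]; exact (hcond i₀).2.1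
            have hΓ0 : (0:ℝ) < Real.Gamma (a₁*σ + b₁) := Real.Gamma_pos_of_pos (by linarith)
            have hsingle : Real.Gamma (a₁*σ + b₁)
                ≤ Real.Gamma (α i₀*σ + β i₀) * Real.Gamma (α i₀*σ + (1 - β i₀ - α i₀*δ)) := by
              have g2 := one_le_Gamma_of_eight_le (hcond i₀).2.2
              have heq : Real.Gamma (α i₀*σ + β i₀) = Real.Gamma (a₁*σ + b₁) := by
                rw [ha₁def, hb₁def]
              rw [heq]
              nlinarith
            have hrest : (1:ℝ) ≤ ∏ i ∈ Finset.univ.erase i₀,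
                (Real.Gamma (α i*σ + β i) * Real.Gamma (α i*σ + (1 - β i - α i*δ))) := by
              calc (1:ℝ) = ∏ _i ∈ Finset.univ.erase i₀, (1:ℝ) := by simp
                _ ≤ _ := Finset.prod_le_prod (fun i _ => zero_le_one)
                    (fun i _ => hone i (Finset.mem_univ i))
            have hprodge : Real.Gamma (a₁*σ + b₁)
                ≤ ∏ i, (Real.Gamma (α i*σ + β i) * Real.Gamma (α i*σ + (1 - β i - α i*δ))) := by
              rw [← Finset.mul_prod_erase Finset.univ _ (Finset.mem_univ i₀)]
              exact le_trans hsingle (le_mul_of_one_le_right (le_trans hΓ0.le hsingle) hrest)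
            have hprodpos : (0:ℝ) < ∏ i, (Real.Gamma (α i*σ + β i) * Real.Gamma (α i*σ + (1 - β i - α i*δ))) :=
              lt_of_lt_of_le hΓ0 hprodge
            rw [div_le_div_iff₀ hprodpos hΓ0]
            exact mul_le_mul_of_nonneg_left hprodge hD.le
    exact mul_le_mul_of_nonneg_left hstep (Real.rpow_nonneg hlam.le _)
  -- bound N^(μσ+ν)
  have hNbound : (N:ℝ) ^ (μ*σ + ν) ≤ σ ^ (g*σ + h) := by
    have hN1 : (1:ℝ) ≤ (N:ℝ) := by exact_mod_cast hN
    have step1 : (N:ℝ) ^ (μ*σ + ν) ≤ (N:ℝ) ^ (|μ| * σ + |ν|) := by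
      apply Real.rpow_le_rpow_of_exponent_le hN1
      have := le_abs_self μ
      have := le_abs_self ν
      nlinarith [abs_nonneg μ]
    have step2 : (N:ℝ) ≤ σ ^ (1/γ) := by
      have hσ₀1 : (1:ℝ) ≤ σ₀ := le_max_left _ _
      have hNγσ : (N:ℝ)^γ ≤ σ :=
        le_trans (le_mul_of_one_le_left (Real.rpow_nonneg (Nat.cast_nonneg N) _) hσ₀1) hσs
      have h1 : ((N:ℝ)^γ)^(1/γ) ≤ σ^(1/γ) :=
        Real.rpow_le_rpow (Real.rpow_nonneg (by positivity) _) hNγσ (by positivity)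
      rwa [← Real.rpow_mul (by positivity), mul_one_div, div_self hγ.ne', Real.rpow_one] at h1
    have step3 : (N:ℝ) ^ (|μ| * σ + |ν|) ≤ (σ ^ (1/γ)) ^ (|μ| * σ + |ν|) :=
      Real.rpow_le_rpow (by positivity) step2 (by positivity)
    have step4 : (σ ^ (1/γ)) ^ (|μ| * σ + |ν|) = σ ^ (g*σ + h) := by
      rw [← Real.rpow_mul hσ0.le]
      congr 1
      rw [hgdef, hhdef]
      field_simp
    calc (N:ℝ) ^ (μ*σ + ν) ≤ (N:ℝ) ^ (|μ| * σ + |ν|) := step1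
      _ ≤ (σ ^ (1/γ)) ^ (|μ| * σ + |ν|) := step3
      _ = σ ^ (g*σ + h) := step4
  -- combine
  have h8' : (8:ℝ) ≤ a₁*σ + b₁ := by rw [ha₁def, hb₁def]; exact (hcond i₀).2.1
  have hΓb : (0:ℝ) < Real.Gamma (a₁*σ + b₁) := Real.Gamma_pos_of_pos (by linarith)
  have hfinal : ‖Gfun k α β lam δ s‖ * (N:ℝ) ^ (μ*σ + ν) * c ^ σ
      ≤ lam ^ (2*σ - δ) * D * σ ^ (g*σ + h) * c ^ σ / Real.Gamma (a₁*σ + b₁) := by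
    have h1 : ‖Gfun k α β lam δ s‖ * (N:ℝ) ^ (μ*σ + ν)
        ≤ (lam ^ (2*σ - δ) * (D / Real.Gamma (a₁*σ + b₁))) * σ ^ (g*σ + h) :=
      mul_le_mul habsG hNbound (Real.rpow_nonneg (by positivity) _)
        (mul_nonneg (Real.rpow_nonneg hlam.le _) (div_nonneg hD.le hΓb.le))
    have h2 := mul_le_mul_of_nonneg_right h1 (Real.rpow_nonneg (le_trans zero_le_one hc) σ)
    calc ‖Gfun k α β lam δ s‖ * (N:ℝ) ^ (μ*σ + ν) * c ^ σ
        ≤ (lam ^ (2*σ - δ) * (D / Real.Gamma (a₁*σ + b₁))) * σ ^ (g*σ + h) * c ^ σ := h2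
      _ = lam ^ (2*σ - δ) * D * σ ^ (g*σ + h) * c ^ σ / Real.Gamma (a₁*σ + b₁) := by
          ring
  exact lt_of_le_of_lt hfinal (hS σ hσS)
end

section
/- Let ω₁, ω₂ > 0 with ω₁ ≠ ω₂ and let φ₁, φ₂ ∈ ℝ. Then for all reals u ≤ v, |∫_u^v sin(ω₁ t + φ₁)·sin(ω₂ t + φ₂) dt| ≤ 2/|ω₁ − ω₂|. -/
/-!
By the product-to-sum formula the integrand is half the difference of two cosines, with frequencies
`ω₁ - ω₂` and `ω₁ + ω₂`. The integral of `cos (a t + b)` is a difference of two values of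
`sin (a t + b) / a`, hence at most `2 / |a|`; for positive frequencies `|ω₁ - ω₂| ≤ ω₁ + ω₂`,
so both bounds are at most `2 / |ω₁ - ω₂|`.
-/

open Real

theorem abs_integral_cos_mul_add_le {a : ℝ} (ha : a ≠ 0) (b u v : ℝ) :
    |∫ t in u..v, cos (a * t + b)| ≤ 2 / |a| := by
  rw [intervalIntegral.integral_comp_mul_add cos ha b, integral_cos, smul_eq_mul, abs_mul,
    abs_inv, ← div_eq_inv_mul]
  gcongr
  linarith [abs_sub (sin (a * v + b)) (sin (a * u + b)), abs_sin_le_one (a * v + b),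
    abs_sin_le_one (a * u + b)]

theorem abs_integral_sin_mul_sin_le {a c : ℝ} (hsub : a ≠ c) (hadd : a + c ≠ 0) (b d u v : ℝ) :
    |∫ t in u..v, sin (a * t + b) * sin (c * t + d)| ≤ 1 / |a - c| + 1 / |a + c| := by
  have hprod : ∀ t, sin (a * t + b) * sin (c * t + d) =
      (cos ((a - c) * t + (b - d)) - cos ((a + c) * t + (b + d))) / 2 := fun t => by
    rw [eq_div_iff two_ne_zero, mul_comm, ← mul_assoc, two_mul_sin_mul_sin]
    ring_nf
  have hint : ∀ k e, IntervalIntegrable (fun t => cos (k * t + e)) MeasureTheory.volume u v :=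
    fun k e => (continuous_cos.comp (by fun_prop)).intervalIntegrable u v
  simp_rw [hprod]
  rw [intervalIntegral.integral_div, intervalIntegral.integral_sub (hint _ _) (hint _ _),
    abs_div, abs_two]
  calc |(∫ t in u..v, cos ((a - c) * t + (b - d))) - ∫ t in u..v, cos ((a + c) * t + (b + d))| / 2
      ≤ (|∫ t in u..v, cos ((a - c) * t + (b - d))| +
          |∫ t in u..v, cos ((a + c) * t + (b + d))|) / 2 := by gcongr; exact abs_sub _ _
    _ ≤ (2 / |a - c| + 2 / |a + c|) / 2 := by
      gcongr
      exacts [abs_integral_cos_mul_add_le (sub_ne_zero.2 hsub) _ _ _,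
        abs_integral_cos_mul_add_le hadd _ _ _]
    _ = 1 / |a - c| + 1 / |a + c| := by ring

theorem integral_sin_mul_sin_bound_general (ω₁ ω₂ : ℝ) (hω₁ : 0 < ω₁) (hω₂ : 0 < ω₂)
    (hne : ω₁ ≠ ω₂) (φ₁ φ₂ : ℝ) (u v : ℝ) :
    |∫ t in u..v, Real.sin (ω₁ * t + φ₁) * Real.sin (ω₂ * t + φ₂)| ≤ 2 / |ω₁ - ω₂| := by
  have hsum : 0 < ω₁ + ω₂ := add_pos hω₁ hω₂
  have hdiff : 0 < |ω₁ - ω₂| := abs_pos.2 (sub_ne_zero.2 hne)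
  have hle : |ω₁ - ω₂| ≤ |ω₁ + ω₂| := by
    rw [abs_of_pos hsum, abs_sub_le_iff]
    constructor <;> linarith
  calc _ ≤ 1 / |ω₁ - ω₂| + 1 / |ω₁ + ω₂| := abs_integral_sin_mul_sin_le hne hsum.ne' φ₁ φ₂ u v
    _ ≤ 1 / |ω₁ - ω₂| + 1 / |ω₁ - ω₂| := by gcongr
    _ = 2 / |ω₁ - ω₂| := by ring

/-- Lemma (Trig): the integral of a product of two sines with distinct positive
frequencies over any interval is `O(1/|ω₁ - ω₂|)`, with explicit constant 2. -/
theorem integral_sin_mul_sin_bound (ω₁ ω₂ : ℝ) (hω₁ : 0 < ω₁) (hω₂ : 0 < ω₂)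
    (hne : ω₁ ≠ ω₂) (φ₁ φ₂ : ℝ) (u v : ℝ) (huv : u ≤ v) :
    |∫ t in u..v, Real.sin (ω₁ * t + φ₁) * Real.sin (ω₂ * t + φ₂)| ≤ 2 / |ω₁ - ω₂| :=
  integral_sin_mul_sin_bound_general ω₁ ω₂ hω₁ hω₂ hne φ₁ φ₂ u v
end

section
/- There exist absolute constants C₁, C₂ > 0 with the following property. Let N ≥ 3 be an integer, let 1 < λ₂ < λ₃ < … < λ_N be reals, let b₂, …, b_N be reals with b₂ ≠ 0, let φ₂, …, φ_N be reals, and let T ∈ ℝ and U > 0 satisfy U·log λ₂ ≥ C₁ and U·|b₂|·log(λ₃/λ₂) ≥ C₂·∑_{n=3}^N |b_n|. Then there exists c ∈ (T, T+U) such that |∑_{n=2}^N b_n sin(c·log λ_n + φ_n)| ≥ |b₂|/10. -/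
open Real

lemma aux_J_norm_le (T U θ ψ : ℝ) (hθ : θ ≠ 0) :
    ‖∫ t in T..(T+U), Complex.exp (Complex.I * ((θ * t + ψ : ℝ) : ℂ))‖ ≤ 2 / |θ| := by
  have h : ∀ t : ℝ, Complex.exp (Complex.I * ((θ * t + ψ : ℝ) : ℂ))
      = Complex.exp (Complex.I * ψ) * Complex.exp ((Complex.I * θ) * t) := by
    intro t; rw [← Complex.exp_add]; push_cast; ring_nf
  have hc : (Complex.I * (θ:ℂ)) ≠ 0 :=
    mul_ne_zero Complex.I_ne_zero (Complex.ofReal_ne_zero.mpr hθ)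
  simp only [h]
  rw [intervalIntegral.integral_const_mul, integral_exp_mul_complex hc]
  have habs : ∀ x : ℝ, ‖Complex.exp (Complex.I * (x:ℂ))‖ = 1 := by
    intro x
    have : Complex.I * (x:ℂ) = (x:ℂ) * Complex.I := by ring
    rw [this, Complex.norm_exp_ofReal_mul_I]
  have h1 : ‖Complex.exp (Complex.I * (θ:ℂ) * (T+U:ℝ))‖ = 1 := by
    rw [mul_assoc, ← Complex.ofReal_mul]; exact habs _
  have h2 : ‖Complex.exp (Complex.I * (θ:ℂ) * (T:ℝ))‖ = 1 := by
    rw [mul_assoc, ← Complex.ofReal_mul]; exact habs _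
  have hIψ : ‖Complex.exp (Complex.I * (ψ:ℂ))‖ = 1 := habs ψ
  rw [norm_mul, hIψ, one_mul, norm_div]
  have hnum : ‖Complex.exp (Complex.I * ↑θ * ↑(T + U)) - Complex.exp (Complex.I * ↑θ * ↑T)‖ ≤ 2 := by
    calc ‖_ - _‖ ≤ ‖Complex.exp (Complex.I * ↑θ * ↑(T + U))‖ + ‖Complex.exp (Complex.I * ↑θ * ↑T)‖ := norm_sub_le _ _
    _ = 2 := by rw [h1, h2]; norm_num
  have hden : ‖Complex.I * (θ:ℂ)‖ = |θ| := by
    rw [norm_mul, Complex.norm_I, one_mul, Complex.norm_real, Real.norm_eq_abs]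
  rw [hden]
  gcongr

lemma aux_J_zero (T U ψ : ℝ) :
    ∫ t in T..(T+U), Complex.exp (Complex.I * (((0:ℝ) * t + ψ : ℝ) : ℂ))
      = (U : ℂ) * Complex.exp (Complex.I * (ψ:ℂ)) := by
  simp only [zero_mul, zero_add]
  rw [intervalIntegral.integral_const]
  rw [show T + U - T = U by ring]
  rw [Complex.real_smul]

lemma aux_sin_mul_exp (x y : ℝ) :
    (↑(Real.sin x) : ℂ) * Complex.exp (Complex.I * ((y:ℝ):ℂ)) =
      (Complex.exp (Complex.I * ((x + y : ℝ):ℂ)) - Complex.exp (Complex.I * ((y - x : ℝ):ℂ))) / (2 * Complex.I) := by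
  have h1 : Complex.exp (Complex.I*((x + y : ℝ):ℂ)) = Complex.exp (x*Complex.I) * Complex.exp (Complex.I*y) := by
    rw [← Complex.exp_add]; push_cast; ring_nf
  have h2 : Complex.exp (Complex.I*((y - x : ℝ):ℂ)) = Complex.exp (-x*Complex.I) * Complex.exp (Complex.I*y) := by
    rw [← Complex.exp_add]; push_cast; ring_nf
  rw [Complex.ofReal_sin, Complex.sin]
  rw [h1, h2]
  have hI := Complex.I_ne_zero
  field_simp
  ring_nf
  simp [Complex.I_sq]

/-- A real trigonometric polynomial `∑_{n=2}^N b_n sin(t log λ_n + φ_n)` with dominant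
first coefficient attains a value of size at least `|b₂|/10` somewhere in `(T, T+U)`,
provided `U log λ₂ ≥ C₁` and `U |b₂| log(λ₃/λ₂) ≥ C₂ ∑_{n=3}^N |b_n|`. -/
theorem trig_poly_large_value :
    ∃ C₁ C₂ : ℝ, 0 < C₁ ∧ 0 < C₂ ∧
      ∀ (N : ℕ), 3 ≤ N → ∀ (Λ b φ : ℕ → ℝ),
        1 < Λ 2 → (∀ n : ℕ, 2 ≤ n → n < N → Λ n < Λ (n + 1)) → b 2 ≠ 0 →
        ∀ T U : ℝ, 0 < U →
          C₁ ≤ U * Real.log (Λ 2) →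
          C₂ * (∑ n ∈ Finset.Icc 3 N, |b n|) ≤ U * |b 2| * Real.log (Λ 3 / Λ 2) →
          ∃ c ∈ Set.Ioo T (T + U),
            |b 2| / 10 ≤ |∑ n ∈ Finset.Icc 2 N, b n * Real.sin (c * Real.log (Λ n) + φ n)| := by
  refine ⟨10, 10, by norm_num, by norm_num, ?_⟩
  intro N hN Λ b φ hΛ2 hmono hb2 T U hU hC1 hC2
  -- abbreviations
  set a : ℕ → ℝ := fun n => Real.log (Λ n) with ha
  have h23 : Λ 2 < Λ 3 := hmono 2 le_rfl (by omega)
  have hΛ2pos : (0:ℝ) < Λ 2 := by linarith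
  have hΛ3 : 1 < Λ 3 := hΛ2.trans h23
  have hΛ3le : ∀ n, 3 ≤ n → n ≤ N → Λ 3 ≤ Λ n := by
    intro n h3 hnN
    induction n with
    | zero => omega
    | succ m ih =>
      rcases Nat.lt_or_ge m 3 with h | h
      · have : m + 1 = 3 := by omega
        rw [this]
      · exact (ih h (by omega)).trans (hmono m (by omega) (by omega)).le
  have ha2 : 0 < a 2 := Real.log_pos hΛ2
  have ha23 : a 2 < a 3 := Real.log_lt_log hΛ2pos h23
  have haN : ∀ n, n ∈ Finset.Icc 3 N → a 3 ≤ a n := by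
    intro n hn
    rw [Finset.mem_Icc] at hn
    exact Real.log_le_log (by linarith) (hΛ3le n hn.1 hn.2)
  have hlogdiv : Real.log (Λ 3 / Λ 2) = a 3 - a 2 :=
    Real.log_div (by linarith) (by linarith)
  rw [hlogdiv] at hC2
  by_contra hcon
  push_neg at hcon
  -- the trig polynomial
  set f : ℝ → ℝ := fun t => ∑ n ∈ Finset.Icc 2 N, b n * Real.sin (t * Real.log (Λ n) + φ n) with hf
  have hfcont : Continuous f := by
    apply continuous_finset_sum
    intro n _
    exact continuous_const.mul (Real.continuous_sin.comp ((continuous_id.mul continuous_const).add continuous_const))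
  have hbound : ∀ c ∈ Set.Icc T (T+U), |f c| ≤ |b 2| / 10 := by
    have hsub : Set.Icc T (T+U) ⊆ {c | |f c| ≤ |b 2|/10} := by
      rw [← closure_Ioo (by linarith : T ≠ T+U)]
      apply closure_minimal
      · intro c hc
        exact (hcon c hc).le
      · exact isClosed_le (hfcont.abs) continuous_const
    exact hsub
  -- the weighted integral
  set Itot : ℂ := ∫ t in T..(T+U), ((f t : ℝ) : ℂ) * Complex.exp (Complex.I * ((-(a 2) * t : ℝ) : ℂ)) with hItotdef
  -- upper bound
  have hupper : ‖Itot‖ ≤ (|b 2| / 10) * U := by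
    have := intervalIntegral.norm_integral_le_of_norm_le_const
      (C := |b 2| / 10) (f := fun t => ((f t : ℝ) : ℂ) * Complex.exp (Complex.I * ((-(a 2) * t : ℝ) : ℂ)))
      (a := T) (b := T + U) ?_
    · calc ‖Itot‖ ≤ (|b 2| / 10) * |T + U - T| := this
        _ = (|b 2| / 10) * U := by rw [show T + U - T = U by ring, abs_of_pos hU]
    · intro x hx
      rw [Set.uIoc_of_le (by linarith)] at hx
      rw [norm_mul, Complex.norm_real, Real.norm_eq_abs]
      have h1 : ‖Complex.exp (Complex.I * ((-(a 2) * x : ℝ) : ℂ))‖ = 1 := by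
        rw [show Complex.I * ((-(a 2) * x : ℝ) : ℂ) = ((-(a 2) * x : ℝ) : ℂ) * Complex.I by ring, Complex.norm_exp_ofReal_mul_I]
      rw [h1, mul_one]
      exact hbound x ⟨hx.1.le, hx.2⟩
  -- decompose the integral
  set J : ℝ → ℝ → ℂ := fun θ ψ => ∫ t in T..(T+U), Complex.exp (Complex.I * ((θ * t + ψ : ℝ) : ℂ)) with hJ
  have hcont2 : ∀ θ ψ : ℝ, Continuous (fun t : ℝ => Complex.exp (Complex.I * ((θ * t + ψ : ℝ) : ℂ))) := by
    intro θ ψ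
    exact Complex.continuous_exp.comp (continuous_const.mul (Complex.continuous_ofReal.comp ((continuous_const.mul continuous_id).add continuous_const)))
  have hterm : ∀ n : ℕ,
      (∫ t in T..(T+U), ((b n * Real.sin (t * Real.log (Λ n) + φ n) : ℝ) : ℂ) * Complex.exp (Complex.I * ((-(a 2) * t : ℝ) : ℂ)))
      = (b n : ℂ) * (J (a n - a 2) (φ n) - J (-(a n + a 2)) (-(φ n))) / (2 * Complex.I) := by
    intro n
    have hpt : ∀ t : ℝ, ((b n * Real.sin (t * Real.log (Λ n) + φ n) : ℝ) : ℂ) * Complex.exp (Complex.I * ((-(a 2) * t : ℝ) : ℂ))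
        = ((b n : ℂ) * Complex.exp (Complex.I * (((a n - a 2) * t + φ n : ℝ) : ℂ))
            - (b n : ℂ) * Complex.exp (Complex.I * (((-(a n + a 2)) * t + (-(φ n)) : ℝ) : ℂ))) / (2 * Complex.I) := by
      intro t
      rw [Complex.ofReal_mul, mul_assoc, aux_sin_mul_exp]
      rw [show ((t * Real.log (Λ n) + φ n) + (-(a 2) * t) : ℝ) = ((a n - a 2) * t + φ n : ℝ) by simp only [ha]; ring,
          show ((-(a 2) * t) - (t * Real.log (Λ n) + φ n) : ℝ) = ((-(a n + a 2)) * t + (-(φ n)) : ℝ) by simp only [ha]; ring]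
      ring
    simp only [hpt]
    rw [intervalIntegral.integral_div,
        intervalIntegral.integral_sub (f := fun t : ℝ => (b n : ℂ) * Complex.exp (Complex.I * (((a n - a 2) * t + φ n : ℝ) : ℂ))) (g := fun t : ℝ => (b n : ℂ) * Complex.exp (Complex.I * (((-(a n + a 2)) * t + (-(φ n)) : ℝ) : ℂ))) ((continuous_const.mul (hcont2 _ _)).intervalIntegrable _ _) ((continuous_const.mul (hcont2 _ _)).intervalIntegrable _ _),
        intervalIntegral.integral_const_mul, intervalIntegral.integral_const_mul]
    simp only [hJ]
    ring
  have hItot : Itot = ∑ n ∈ Finset.Icc 2 N,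
      (b n : ℂ) * (J (a n - a 2) (φ n) - J (-(a n + a 2)) (-(φ n))) / (2 * Complex.I) := by
    rw [hItotdef]
    have : ∀ t : ℝ, ((f t : ℝ) : ℂ) * Complex.exp (Complex.I * ((-(a 2) * t : ℝ) : ℂ))
        = ∑ n ∈ Finset.Icc 2 N, ((b n * Real.sin (t * Real.log (Λ n) + φ n) : ℝ) : ℂ) * Complex.exp (Complex.I * ((-(a 2) * t : ℝ) : ℂ)) := by
      intro t
      rw [hf]
      push_cast
      rw [Finset.sum_mul]
    simp only [this]
    rw [intervalIntegral.integral_finset_sum]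
    · exact Finset.sum_congr rfl fun n _ => hterm n
    · intro n _
      apply Continuous.intervalIntegrable
      have hexp : Continuous fun t : ℝ => Complex.exp (Complex.I * ((-(a 2) * t : ℝ) : ℂ)) :=
        Complex.continuous_exp.comp (continuous_const.mul (Complex.continuous_ofReal.comp (continuous_const.mul continuous_id)))
      have hre : Continuous fun t : ℝ => ((b n * Real.sin (t * Real.log (Λ n) + φ n) : ℝ) : ℂ) :=
        Complex.continuous_ofReal.comp (continuous_const.mul (Real.continuous_sin.comp ((continuous_id.mul continuous_const).add continuous_const)))
      exact hre.mul hexp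
  -- split off n = 2
  have hsplit : Finset.Icc 2 N = insert 2 (Finset.Icc 3 N) := by
    ext x; simp only [Finset.mem_Icc, Finset.mem_insert]; omega
  have h2notin : (2:ℕ) ∉ Finset.Icc 3 N := by simp
  -- norm of a general term
  have hnormterm : ∀ n : ℕ, ‖(b n : ℂ) * (J (a n - a 2) (φ n) - J (-(a n + a 2)) (-(φ n))) / (2 * Complex.I)‖
      = |b n| * ‖J (a n - a 2) (φ n) - J (-(a n + a 2)) (-(φ n))‖ / 2 := by
    intro n
    rw [norm_div, norm_mul, norm_mul, Complex.norm_real, Real.norm_eq_abs, Complex.norm_I, mul_one]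
    norm_num
  -- bound the tail
  have htail : ‖∑ n ∈ Finset.Icc 3 N, (b n : ℂ) * (J (a n - a 2) (φ n) - J (-(a n + a 2)) (-(φ n))) / (2 * Complex.I)‖
      ≤ (2 / (a 3 - a 2)) * ∑ n ∈ Finset.Icc 3 N, |b n| := by
    calc ‖∑ n ∈ Finset.Icc 3 N, (b n : ℂ) * (J (a n - a 2) (φ n) - J (-(a n + a 2)) (-(φ n))) / (2 * Complex.I)‖
        ≤ ∑ n ∈ Finset.Icc 3 N, ‖(b n : ℂ) * (J (a n - a 2) (φ n) - J (-(a n + a 2)) (-(φ n))) / (2 * Complex.I)‖ :=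
          norm_sum_le _ _
      _ ≤ ∑ n ∈ Finset.Icc 3 N, (2 / (a 3 - a 2)) * |b n| := by
          apply Finset.sum_le_sum
          intro n hn
          rw [hnormterm n]
          have hd : 0 < a 3 - a 2 := by linarith
          have hle : a 3 - a 2 ≤ a n - a 2 := by have := haN n hn; linarith
          have hle2 : a 3 - a 2 ≤ a n + a 2 := by have := haN n hn; linarith
          have h1 : ‖J (a n - a 2) (φ n)‖ ≤ 2 / (a 3 - a 2) := by
            refine (aux_J_norm_le T U _ _ (by linarith)).trans ?_
            rw [abs_of_pos (by linarith : (0:ℝ) < a n - a 2)]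
            gcongr
          have h2 : ‖J (-(a n + a 2)) (-(φ n))‖ ≤ 2 / (a 3 - a 2) := by
            refine (aux_J_norm_le T U _ _ (by intro h; rw [neg_eq_zero] at h; linarith)).trans ?_
            rw [abs_neg, abs_of_pos (by linarith : (0:ℝ) < a n + a 2)]
            gcongr
          calc |b n| * ‖J (a n - a 2) (φ n) - J (-(a n + a 2)) (-(φ n))‖ / 2
              ≤ |b n| * (2 / (a 3 - a 2) + 2 / (a 3 - a 2)) / 2 := by
                gcongr
                exact (norm_sub_le _ _).trans (by gcongr)
            _ = (2 / (a 3 - a 2)) * |b n| := by ring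
      _ = (2 / (a 3 - a 2)) * ∑ n ∈ Finset.Icc 3 N, |b n| := by rw [← Finset.mul_sum]
  -- lower bound on the main term
  have hmain : (|b 2| * (U - U / 10)) / 2 ≤ ‖(b 2 : ℂ) * (J (a 2 - a 2) (φ 2) - J (-(a 2 + a 2)) (-(φ 2))) / (2 * Complex.I)‖ := by
    rw [hnormterm 2]
    have hJ0 : ‖J (a 2 - a 2) (φ 2)‖ = U := by
      rw [hJ]
      simp only [sub_self]
      rw [aux_J_zero]
      rw [norm_mul, Complex.norm_real, Real.norm_eq_abs, abs_of_pos hU]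
      have : ‖Complex.exp (Complex.I * ((φ 2 : ℝ) : ℂ))‖ = 1 := by
        rw [show Complex.I * ((φ 2:ℝ) : ℂ) = ((φ 2:ℝ) : ℂ) * Complex.I by ring, Complex.norm_exp_ofReal_mul_I]
      rw [this, mul_one]
    have hJ2 : ‖J (-(a 2 + a 2)) (-(φ 2))‖ ≤ U / 10 := by
      refine (aux_J_norm_le T U _ _ (by intro h; rw [neg_eq_zero] at h; linarith)).trans ?_
      rw [abs_neg, abs_of_pos (by linarith : (0:ℝ) < a 2 + a 2)]
      -- 2 / (2 a 2) = 1 / a 2 ≤ U / 10  since  10 ≤ U * a 2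
      rw [div_le_div_iff₀ (by linarith) (by norm_num)]
      nlinarith [hC1]
    have hdiff : U - U / 10 ≤ ‖J (a 2 - a 2) (φ 2) - J (-(a 2 + a 2)) (-(φ 2))‖ := by
      have := norm_sub_norm_le (J (a 2 - a 2) (φ 2)) (J (-(a 2 + a 2)) (-(φ 2)))
      rw [hJ0] at this
      linarith [this, hJ2]
    have hb2' : 0 ≤ |b 2| := abs_nonneg _
    gcongr
  -- put everything together
  have hS : 0 ≤ ∑ n ∈ Finset.Icc 3 N, |b n| := Finset.sum_nonneg fun n _ => abs_nonneg _
  have hd : 0 < a 3 - a 2 := by linarith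
  have htail2 : (2 / (a 3 - a 2)) * ∑ n ∈ Finset.Icc 3 N, |b n| ≤ U * |b 2| / 5 := by
    rw [div_mul_eq_mul_div, div_le_div_iff₀ hd (by norm_num)]
    nlinarith [hC2]
  have hlower : |b 2| * U / 4 ≤ ‖Itot‖ := by
    rw [hItot, hsplit, Finset.sum_insert h2notin]
    have h1 := norm_sub_norm_le
      ((b 2 : ℂ) * (J (a 2 - a 2) (φ 2) - J (-(a 2 + a 2)) (-(φ 2))) / (2 * Complex.I))
      (-(∑ n ∈ Finset.Icc 3 N, (b n : ℂ) * (J (a n - a 2) (φ n) - J (-(a n + a 2)) (-(φ n))) / (2 * Complex.I)))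
    rw [sub_neg_eq_add, norm_neg] at h1
    have hb2pos : 0 < |b 2| := abs_pos.mpr hb2
    nlinarith [hmain, htail, htail2, h1]
  have hb2pos : 0 < |b 2| := abs_pos.mpr hb2
  nlinarith [hupper, hlower]
end
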